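/- Let G be a graph on d+2 vertices that is representable in ℝ^d with ratio k. Then G has a spherical representation in ℝ^d with ratio k if and only if both of the following hold: (3) det(x·J + B_G(k)) is the zero polynomial in the variable x; (4) there exists a real number r₀ such that r·J + B_G(k) is positive semidefinite for every r ≥ r₀. -/

import Mathlib

open Matrix Finset
open scoped Classical

noncomputable section

/-- `p` realizes the graph `G` as a 2-distance set in `ℝ^d` with distance ratio `k`:
the larger distance `α₁` occurs exactly between adjacent vertices, the smaller
distance `α₂` between distinct non-adjacent vertices, both distances occur,
and `k = α₁ / α₂`. -/
def IsTwoDistRep (n d : ℕ) (G : SimpleGraph (Fin n)) (k : ℝ)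
    (p : Fin n → EuclideanSpace ℝ (Fin d)) : Prop :=
  ∃ α₁ α₂ : ℝ, α₂ < α₁ ∧ 0 < α₂ ∧ k = α₁ / α₂ ∧
    (∀ i j : Fin n, G.Adj i j → dist (p i) (p j) = α₁) ∧
    (∀ i j : Fin n, i ≠ j → ¬ G.Adj i j → dist (p i) (p j) = α₂) ∧
    (∃ i j : Fin n, G.Adj i j) ∧ (∃ i j : Fin n, i ≠ j ∧ ¬ G.Adj i j)

/-- `G` (a graph on `n` vertices) is representable in `ℝ^d` with ratio `k`. -/
def RepresentableWith (n d : ℕ) (G : SimpleGraph (Fin n)) (k : ℝ) : Prop :=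
  ∃ p : Fin n → EuclideanSpace ℝ (Fin d), IsTwoDistRep n d G k p

/-- `G` has a spherical representation in `ℝ^d` with ratio `k`. -/
def SphericalWith (n d : ℕ) (G : SimpleGraph (Fin n)) (k : ℝ) : Prop :=
  ∃ (p : Fin n → EuclideanSpace ℝ (Fin d)) (c : EuclideanSpace ℝ (Fin d)) (r : ℝ),
    IsTwoDistRep n d G k p ∧ ∀ i, dist (p i) c = r

/-- `G` has a spherical representation in `ℝ^d` (for some ratio). -/
def Spherical (n d : ℕ) (G : SimpleGraph (Fin n)) : Prop :=
  ∃ k : ℝ, SphericalWith n d G k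

/-- `G` is a complete multipartite graph: vertices can be classified so that two
vertices are adjacent exactly when they lie in different classes. -/
def IsCompleteMultipartite {n : ℕ} (G : SimpleGraph (Fin n)) : Prop :=
  ∃ f : Fin n → Fin n, ∀ i j : Fin n, G.Adj i j ↔ f i ≠ f j

/-- The matrix `B_G(k)`: zero diagonal, `-k²` at adjacent pairs, `-1` at
distinct non-adjacent pairs. -/
def BG {n : ℕ} (G : SimpleGraph (Fin n)) [DecidableRel G.Adj] (k : ℝ) :
    Matrix (Fin n) (Fin n) ℝ :=
  Matrix.of fun i j => if i = j then 0 else if G.Adj i j then -k ^ 2 else -1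

/-- The all-ones matrix `J`. -/
def Jmat (n : ℕ) : Matrix (Fin n) (Fin n) ℝ := Matrix.of fun _ _ => 1

/-- The orthogonal complement `𝟙^⊥` of the all-ones vector in `ℝ^n`. -/
def onePerp (n : ℕ) : Submodule ℝ (Fin n → ℝ) :=
  LinearMap.ker ((∑ i : Fin n, LinearMap.proj i : (Fin n → ℝ) →ₗ[ℝ] ℝ))

end


noncomputable section AuxLemmas
open scoped RealInnerProductSpace

open scoped RealInnerProductSpace

lemma herm_of_symm {n : ℕ} {M : Matrix (Fin n) (Fin n) ℝ} (h : ∀ i j, M i j = M j i) :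
    M.IsHermitian := by
  ext i j
  simpa [Matrix.conjTranspose_apply] using h j i

lemma psd_iff {n : ℕ} {M : Matrix (Fin n) (Fin n) ℝ} :
    M.PosSemidef ↔ M.IsHermitian ∧ ∀ x : Fin n → ℝ, 0 ≤ x ⬝ᵥ (M *ᵥ x) := by
  rw [Matrix.posSemidef_iff_dotProduct_mulVec]
  simp [star_trivial]

lemma psd_quad_nonneg {n : ℕ} {M : Matrix (Fin n) (Fin n) ℝ} (hM : M.PosSemidef)
    (x : Fin n → ℝ) : 0 ≤ x ⬝ᵥ (M *ᵥ x) := (psd_iff.1 hM).2 x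

lemma psd_mulVec_zero {n : ℕ} {M : Matrix (Fin n) (Fin n) ℝ} (hM : M.PosSemidef)
    {x : Fin n → ℝ} (h : x ⬝ᵥ (M *ᵥ x) = 0) : M *ᵥ x = 0 := by
  refine (hM.dotProduct_mulVec_zero_iff x).1 ?_
  simpa [star_trivial] using h

lemma Jmat_mulVec {n : ℕ} (x : Fin n → ℝ) : (Jmat n) *ᵥ x = fun _ => ∑ i, x i := by
  funext i
  simp [Jmat, Matrix.mulVec, dotProduct]

lemma quad_J {n : ℕ} (x : Fin n → ℝ) : x ⬝ᵥ ((Jmat n) *ᵥ x) = (∑ i, x i) ^ 2 := by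
  rw [Jmat_mulVec]
  simp only [dotProduct]
  rw [← Finset.sum_mul, sq]

lemma quad_smulJ_add {n : ℕ} (t : ℝ) (B : Matrix (Fin n) (Fin n) ℝ) (x : Fin n → ℝ) :
    x ⬝ᵥ ((t • Jmat n + B) *ᵥ x) = t * (∑ i, x i) ^ 2 + x ⬝ᵥ (B *ᵥ x) := by
  rw [Matrix.add_mulVec, dotProduct_add, Matrix.smul_mulVec,
    dotProduct_smul, smul_eq_mul, quad_J]

lemma gram_mulVec {n d : ℕ} {M : Matrix (Fin n) (Fin n) ℝ}
    {a : Fin n → EuclideanSpace ℝ (Fin d)}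
    (h : ∀ i j, M i j = ⟪a i, a j⟫) (x : Fin n → ℝ) (i : Fin n) :
    (M *ᵥ x) i = ⟪a i, ∑ j, x j • a j⟫ := by
  rw [inner_sum]
  simp only [real_inner_smul_right]
  simp [Matrix.mulVec, dotProduct, h, mul_comm]

lemma gram_quad {n d : ℕ} {M : Matrix (Fin n) (Fin n) ℝ}
    {a : Fin n → EuclideanSpace ℝ (Fin d)}
    (h : ∀ i j, M i j = ⟪a i, a j⟫) (x : Fin n → ℝ) :
    x ⬝ᵥ (M *ᵥ x) = ‖∑ j, x j • a j‖ ^ 2 := by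
  rw [← real_inner_self_eq_norm_sq, sum_inner, dotProduct]
  refine Finset.sum_congr rfl fun i _ => ?_
  rw [gram_mulVec h, real_inner_smul_left]

lemma exists_points {n d : ℕ} (M : Matrix (Fin n) (Fin n) ℝ) (hM : M.PosSemidef)
    (hrank : M.rank ≤ d) :
    ∃ p : Fin n → EuclideanSpace ℝ (Fin d), ∀ i j, ⟪p i, p j⟫ = M i j := by
  obtain ⟨C, hC⟩ : ∃ C : Matrix (Fin n) (Fin n) ℝ, M = Cᴴ * C := by
    open scoped MatrixOrder in
    obtain ⟨X, hX, -, hXe⟩ := CFC.exists_sqrt_of_isSelfAdjoint_of_quasispectrumRestricts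
      hM.isHermitian (QuasispectrumRestricts.nnreal_of_nonneg (Matrix.nonneg_iff_posSemidef.mpr hM))
    exact ⟨X, by rw [← hXe]; congr 1; exact hX.symm⟩
  set q : Fin n → EuclideanSpace ℝ (Fin n) :=
    fun i => (WithLp.equiv 2 (Fin n → ℝ)).symm (C *ᵥ Pi.single i 1) with hqdef
  have hinner : ∀ i j, ⟪q i, q j⟫ = M i j := by
    intro i j
    rw [hC]
    simp only [hqdef, PiLp.inner_apply, RCLike.inner_apply,
      Matrix.mulVec_single, Matrix.mul_apply, Matrix.conjTranspose_apply]
    simp [mul_one, mul_comm]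
  set W : Submodule ℝ (EuclideanSpace ℝ (Fin n)) :=
    Submodule.map ((WithLp.linearEquiv 2 ℝ (Fin n → ℝ)).symm : (Fin n → ℝ) →ₗ[ℝ] EuclideanSpace ℝ (Fin n))
      (LinearMap.range C.mulVecLin) with hWdef
  have hq : ∀ i, q i ∈ W := by
    intro i
    exact Submodule.mem_map_of_mem ⟨Pi.single i 1, rfl⟩
  have hfr : Module.finrank ℝ W ≤ d := by
    have h1 : Module.finrank ℝ W = Module.finrank ℝ (LinearMap.range C.mulVecLin) :=
      LinearEquiv.finrank_map_eq _ _
    have h2 : Module.finrank ℝ (LinearMap.range C.mulVecLin) = C.rank := rfl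
    have h3 : C.rank = M.rank := by
      rw [hC, Matrix.conjTranspose_eq_transpose_of_trivial, Matrix.rank_transpose_mul_self]
    omega
  set m := Module.finrank ℝ W with hmdef
  set b := stdOrthonormalBasis ℝ W with hbdef
  set v : Fin m → EuclideanSpace ℝ (Fin d) :=
    (EuclideanSpace.basisFun (Fin d) ℝ) ∘ (Fin.castLE hfr) with hvdef
  have hv : Orthonormal ℝ v :=
    (EuclideanSpace.basisFun (Fin d) ℝ).orthonormal.comp _ (Fin.castLE_injective hfr)
  refine ⟨fun i => ∑ s, (b.repr ⟨q i, hq i⟩ s) • v s, fun i j => ?_⟩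
  have h1 := hv.inner_sum (b.repr ⟨q i, hq i⟩) (b.repr ⟨q j, hq j⟩) Finset.univ
  have h5 : ⟪q i, q j⟫ = ∑ s, (starRingEnd ℝ) (b.repr ⟨q i, hq i⟩ s) * b.repr ⟨q j, hq j⟩ s := by
    have h0 : ⟪q i, q j⟫ = ⟪b.repr ⟨q i, hq i⟩, b.repr ⟨q j, hq j⟩⟫ := by
      rw [b.repr.inner_map_map ⟨q i, hq i⟩ ⟨q j, hq j⟩]
      rfl
    rw [h0, PiLp.inner_apply]
    simp [RCLike.inner_apply]
    exact Finset.sum_congr rfl fun _ _ => mul_comm _ _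
  rw [h1, ← h5, hinner]

lemma dot_self_ne {n : ℕ} {w : Fin n → ℝ} (hw : w ≠ 0) : w ⬝ᵥ w ≠ 0 := by
  intro h
  exact hw (dotProduct_self_eq_zero.mp h)

lemma cont_dot {n : ℕ} (w : Fin n → ℝ) : Continuous fun x : Fin n → ℝ => x ⬝ᵥ w := by
  show Continuous fun x : Fin n → ℝ => ∑ i, x i * w i
  exact continuous_finset_sum _ fun i _ => (continuous_apply i).mul continuous_const

lemma cont_quad {n : ℕ} (M : Matrix (Fin n) (Fin n) ℝ) :
    Continuous fun x : Fin n → ℝ => x ⬝ᵥ (M *ᵥ x) := by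
  show Continuous fun x : Fin n → ℝ => ∑ i, x i * ∑ j, M i j * x j
  refine continuous_finset_sum _ fun i _ => (continuous_apply i).mul ?_
  exact continuous_finset_sum _ fun j _ => continuous_const.mul (continuous_apply j)

lemma quad_smul {n : ℕ} (M : Matrix (Fin n) (Fin n) ℝ) (c : ℝ) (u : Fin n → ℝ) :
    (c • u) ⬝ᵥ (M *ᵥ (c • u)) = c ^ 2 * (u ⬝ᵥ (M *ᵥ u)) := by
  rw [Matrix.mulVec_smul, dotProduct_smul, smul_dotProduct]
  simp [smul_eq_mul]; ring

/-- On the `w`-orthogonal complement, a psd matrix whose kernel is contained in the span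
of `w` has a positive quadratic lower bound. -/
lemma quad_lower_bound {n : ℕ} (hn : 2 ≤ n) (M : Matrix (Fin n) (Fin n) ℝ)
    (hM : M.PosSemidef) (w : Fin n → ℝ) (hw : w ≠ 0)
    (hker : ∀ u : Fin n → ℝ, M *ᵥ u = 0 → ∃ c : ℝ, u = c • w) :
    ∃ m : ℝ, 0 < m ∧ ∀ u : Fin n → ℝ, u ⬝ᵥ w = 0 → m * ‖u‖ ^ 2 ≤ u ⬝ᵥ (M *ᵥ u) := by
  classical
  set K : Set (Fin n → ℝ) := Metric.sphere 0 1 ∩ {x | x ⬝ᵥ w = 0} with hK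
  have hKc : IsCompact K :=
    (isCompact_sphere 0 1).inter_right (isClosed_eq (cont_dot w) continuous_const)
  -- K is nonempty
  have hKne : K.Nonempty := by
    obtain ⟨y, hy⟩ : ∃ y : Fin n → ℝ, y ∉ Submodule.span ℝ {w} := by
      by_contra h
      push_neg at h
      have htop : (Submodule.span ℝ {w} : Submodule ℝ (Fin n → ℝ)) = ⊤ :=
        Submodule.eq_top_iff'.mpr h
      have h1 : Module.finrank ℝ (Submodule.span ℝ ({w} : Set (Fin n → ℝ))) = 1 :=
        finrank_span_singleton hw
      rw [htop, finrank_top, Module.finrank_fintype_fun_eq_card, Fintype.card_fin] at h1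
      omega
    set u₀ : Fin n → ℝ := y - ((y ⬝ᵥ w) / (w ⬝ᵥ w)) • w with hu₀
    have hu₀w : u₀ ⬝ᵥ w = 0 := by
      rw [hu₀, sub_dotProduct, smul_dotProduct, smul_eq_mul,
        div_mul_cancel₀ _ (dot_self_ne hw)]
      ring
    have hu₀ne : u₀ ≠ 0 := by
      intro h
      apply hy
      rw [Submodule.mem_span_singleton]
      exact ⟨(y ⬝ᵥ w) / (w ⬝ᵥ w), by rw [eq_comm, ← sub_eq_zero]; exact h⟩
    refine ⟨‖u₀‖⁻¹ • u₀, ?_, ?_⟩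
    · simp only [Metric.mem_sphere, dist_zero_right, norm_smul, norm_inv, norm_norm]
      rw [inv_mul_cancel₀ (norm_ne_zero_iff.mpr hu₀ne)]
    · show (‖u₀‖⁻¹ • u₀) ⬝ᵥ w = 0
      rw [smul_dotProduct, hu₀w, smul_zero]
  obtain ⟨z, hzK, hz⟩ := hKc.exists_isMinOn hKne (cont_quad M).continuousOn
  set m := z ⬝ᵥ (M *ᵥ z) with hm
  have hz1 : ‖z‖ = 1 := by
    have := hzK.1
    simpa using this
  have hzw : z ⬝ᵥ w = 0 := hzK.2
  have hmpos : 0 < m := by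
    rcases lt_or_eq_of_le ((psd_iff.1 hM).2 z) with h | h
    · exact h
    · exfalso
      have hMz : M *ᵥ z = 0 := psd_mulVec_zero hM h.symm
      obtain ⟨c, hc⟩ := hker z hMz
      have : c * (w ⬝ᵥ w) = 0 := by
        rw [hc, smul_dotProduct, smul_eq_mul] at hzw
        exact hzw
      rcases mul_eq_zero.mp this with h' | h'
      · rw [hc, h', zero_smul] at hz1; simp at hz1
      · exact dot_self_ne hw h'
  refine ⟨m, hmpos, fun u huw => ?_⟩
  rcases eq_or_ne u 0 with rfl | hune
  · simp
  · have hx : (‖u‖⁻¹ • u) ∈ K := by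
      constructor
      · simp only [Metric.mem_sphere, dist_zero_right, norm_smul, norm_inv, norm_norm]
        rw [inv_mul_cancel₀ (norm_ne_zero_iff.mpr hune)]
      · show (‖u‖⁻¹ • u) ⬝ᵥ w = 0
        rw [smul_dotProduct, huw, smul_zero]
    have h1 : m ≤ (‖u‖⁻¹ • u) ⬝ᵥ (M *ᵥ (‖u‖⁻¹ • u)) := hz hx
    rw [quad_smul] at h1
    have hnorm : (0:ℝ) < ‖u‖ := norm_pos_iff.mpr hune
    have h2 : (‖u‖⁻¹) ^ 2 * (u ⬝ᵥ (M *ᵥ u)) = (u ⬝ᵥ (M *ᵥ u)) / ‖u‖ ^ 2 := by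
      field_simp
    rw [h2] at h1
    exact (le_div_iff₀ (by positivity)).mp h1


variable {n : ℕ}

lemma BG_symm {G : SimpleGraph (Fin n)} [DecidableRel G.Adj] (k : ℝ) (i j : Fin n) :
    BG G k i j = BG G k j i := by
  by_cases h : i = j
  · rw [h]
  · simp only [BG, Matrix.of_apply, if_neg h, if_neg (Ne.symm h)]
    by_cases ha : G.Adj i j
    · rw [if_pos ha, if_pos ha.symm]
    · rw [if_neg ha, if_neg (fun hs => ha hs.symm)]

lemma tJB_diag {G : SimpleGraph (Fin n)} [DecidableRel G.Adj] (k t : ℝ) (i : Fin n) :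
    (t • Jmat n + BG G k) i i = t := by
  simp [Jmat, BG, Matrix.add_apply, Matrix.smul_apply, smul_eq_mul]

lemma tJB_adj {G : SimpleGraph (Fin n)} [DecidableRel G.Adj] (k t : ℝ) {i j : Fin n}
    (h : G.Adj i j) : (t • Jmat n + BG G k) i j = t - k ^ 2 := by
  simp only [Jmat, BG, Matrix.add_apply, Matrix.smul_apply, Matrix.of_apply,
    if_neg (G.ne_of_adj h), if_pos h, smul_eq_mul, mul_one]
  ring

lemma tJB_nonadj {G : SimpleGraph (Fin n)} [DecidableRel G.Adj] (k t : ℝ) {i j : Fin n}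
    (h1 : i ≠ j) (h2 : ¬ G.Adj i j) : (t • Jmat n + BG G k) i j = t - 1 := by
  simp only [Jmat, BG, Matrix.add_apply, Matrix.smul_apply, Matrix.of_apply,
    if_neg h1, if_neg h2, smul_eq_mul, mul_one]
  ring

lemma herm_tJB {G : SimpleGraph (Fin n)} [DecidableRel G.Adj] (k t : ℝ) :
    (t • Jmat n + BG G k).IsHermitian := by
  refine herm_of_symm fun i j => ?_
  simp only [Matrix.add_apply, Matrix.smul_apply, Jmat, Matrix.of_apply]
  rw [BG_symm]

lemma psd_smulJ {t : ℝ} (ht : 0 ≤ t) : (t • Jmat n).PosSemidef := by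
  refine psd_iff.2 ⟨herm_of_symm fun i j => rfl, fun x => ?_⟩
  rw [Matrix.smul_mulVec, dotProduct_smul, smul_eq_mul, quad_J]
  exact mul_nonneg ht (sq_nonneg _)

lemma quad_pair (A : Matrix (Fin n) (Fin n) ℝ) (i j : Fin n) :
    (Pi.single i 1 + Pi.single j 1) ⬝ᵥ (A *ᵥ (Pi.single i 1 + Pi.single j 1))
      = A i i + A i j + (A j i + A j j) := by
  rw [Matrix.mulVec_add, add_dotProduct, Matrix.mulVec_single, Matrix.mulVec_single,
    dotProduct_add, dotProduct_add]
  simp [single_dotProduct]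

lemma psd_t_ge {d : ℕ} {G : SimpleGraph (Fin (d+2))} [DecidableRel G.Adj] {k t : ℝ}
    (hk : 1 ≤ k) (h : (t • Jmat (d+2) + BG G k).PosSemidef) : 1/2 ≤ t := by
  have hij : (0 : Fin (d+2)) ≠ 1 := by
    simp [Fin.ext_iff]
  have hq := psd_quad_nonneg h (Pi.single (0 : Fin (d+2)) 1 + Pi.single 1 1)
  rw [quad_pair] at hq
  have hB : BG G k (0 : Fin (d+2)) 1 ≤ -1 := by
    simp only [BG, Matrix.of_apply, if_neg hij]
    by_cases ha : G.Adj 0 1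
    · rw [if_pos ha]; nlinarith
    · rw [if_neg ha]
  have e1 : (t • Jmat (d+2) + BG G k) (0 : Fin (d+2)) 0 = t := tJB_diag k t 0
  have e2 : (t • Jmat (d+2) + BG G k) (1 : Fin (d+2)) 1 = t := tJB_diag k t 1
  have e3 : (t • Jmat (d+2) + BG G k) (0 : Fin (d+2)) 1 = t + BG G k 0 1 := by
    simp [Jmat, Matrix.add_apply, Matrix.smul_apply, smul_eq_mul]
  have e4 : (t • Jmat (d+2) + BG G k) (1 : Fin (d+2)) 0 = t + BG G k 0 1 := by
    simp only [Matrix.add_apply, Matrix.smul_apply, Jmat, Matrix.of_apply, smul_eq_mul, mul_one]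
    rw [BG_symm]
  rw [e1, e2, e3, e4] at hq
  linarith

lemma eval_detP (Bm : Matrix (Fin n) (Fin n) ℝ) (r : ℝ) :
    (((Polynomial.X : Polynomial ℝ) • (Jmat n).map (fun x => Polynomial.C x)
      + Bm.map (fun x => Polynomial.C x)).det).eval r = (r • Jmat n + Bm).det := by
  rw [← Polynomial.coe_evalRingHom, RingHom.map_det]
  congr 1
  ext i j
  simp [RingHom.mapMatrix_apply, Matrix.map_apply, Matrix.add_apply, Matrix.smul_apply,
    smul_eq_mul, Jmat]

lemma sph_to_matrix {d : ℕ} {G : SimpleGraph (Fin (d+2))} [DecidableRel G.Adj] {k : ℝ}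
    (hs : SphericalWith (d+2) d G k) :
    ∃ t : ℝ, 0 < t ∧ (t • Jmat (d+2) + BG G k).PosSemidef ∧
      ∃ w : Fin (d+2) → ℝ, w ≠ 0 ∧ (t • Jmat (d+2) + BG G k) *ᵥ w = 0 ∧ ∑ i, w i = 0 := by
  obtain ⟨p, c, r, ⟨α₁, α₂, hlt, hα₂, hkeq, hadj, hnadj, ⟨i₀, j₀, hadj₀⟩, _⟩, hsph⟩ := hs
  have hα₂ne : α₂ ≠ 0 := ne_of_gt hα₂
  have hα₁ : α₁ = k * α₂ := by rw [hkeq]; field_simp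
  set a : Fin (d+2) → EuclideanSpace ℝ (Fin d) := fun i => (Real.sqrt 2 / α₂) • (p i - c)
    with ha
  set t : ℝ := 2 * r ^ 2 / α₂ ^ 2 with htdef
  have hr0 : 0 ≤ r := by rw [← hsph i₀]; exact dist_nonneg
  have hrpos : 0 < r := by
    rcases eq_or_lt_of_le hr0 with h | h
    · exfalso
      have h1 : p i₀ = c := dist_eq_zero.mp (by rw [hsph i₀, ← h])
      have h2 : p j₀ = c := dist_eq_zero.mp (by rw [hsph j₀, ← h])
      have h3 := hadj i₀ j₀ hadj₀
      rw [h1, h2, dist_self] at h3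
      linarith
    · exact h
  have htpos : 0 < t := by rw [htdef]; positivity
  have hs2 : Real.sqrt 2 * Real.sqrt 2 = 2 := Real.mul_self_sqrt (by norm_num)
  have key : ∀ i j, ⟪a i, a j⟫ = (2 * r ^ 2 - dist (p i) (p j) ^ 2) / α₂ ^ 2 := by
    intro i j
    have h1 : ⟪a i, a j⟫ = (Real.sqrt 2 / α₂) * ((Real.sqrt 2 / α₂) * ⟪p i - c, p j - c⟫) := by
      rw [ha]; rw [real_inner_smul_left, real_inner_smul_right]
    have h2 : ‖p i - c‖ = r := by rw [← dist_eq_norm]; exact hsph i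
    have h3 : ‖p j - c‖ = r := by rw [← dist_eq_norm]; exact hsph j
    have h4 : ‖(p i - c) - (p j - c)‖ = dist (p i) (p j) := by
      rw [sub_sub_sub_cancel_right, ← dist_eq_norm]
    have h5 := norm_sub_sq_real (p i - c) (p j - c)
    rw [h2, h3, h4] at h5
    have h6 : ⟪p i - c, p j - c⟫ = (2 * r ^ 2 - dist (p i) (p j) ^ 2) / 2 := by linarith
    rw [h1, h6]
    have e1 : Real.sqrt 2 / α₂ * (Real.sqrt 2 / α₂ * ((2 * r ^ 2 - dist (p i) (p j) ^ 2) / 2))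
        = (Real.sqrt 2 * Real.sqrt 2) * ((2 * r ^ 2 - dist (p i) (p j) ^ 2) / (2 * α₂ ^ 2)) := by
      ring
    rw [e1, hs2]
    field_simp
  have hgram : ∀ i j, (t • Jmat (d+2) + BG G k) i j = ⟪a i, a j⟫ := by
    intro i j
    rw [key]
    by_cases hij : i = j
    · subst hij
      rw [tJB_diag, dist_self]
      rw [htdef]; ring_nf
    · by_cases hAdj : G.Adj i j
      · rw [tJB_adj k t hAdj, hadj i j hAdj, hα₁, htdef]
        field_simp
      · rw [tJB_nonadj k t hij hAdj, hnadj i j hij hAdj, htdef]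
        field_simp
  refine ⟨t, htpos, ?_, ?_⟩
  · exact psd_iff.2 ⟨herm_tJB k t, fun x => by rw [gram_quad hgram]; positivity⟩
  · set f1 : (Fin (d+2) → ℝ) →ₗ[ℝ] EuclideanSpace ℝ (Fin d) :=
      ∑ i, LinearMap.smulRight (LinearMap.proj i) (a i) with hf1def
    have hf1 : ∀ x, f1 x = ∑ i, x i • a i := by
      intro x
      rw [hf1def]
      simp [LinearMap.sum_apply]
    set f2 : (Fin (d+2) → ℝ) →ₗ[ℝ] ℝ := ∑ i, LinearMap.proj i with hf2def
    have hf2 : ∀ x, f2 x = ∑ i, x i := by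
      intro x
      rw [hf2def]
      simp [LinearMap.sum_apply]
    have hker : LinearMap.ker (f1.prod f2) ≠ ⊥ := by
      intro h
      have hinj := LinearMap.ker_eq_bot.mp h
      have hle := LinearMap.finrank_le_finrank_of_injective hinj
      rw [Module.finrank_fintype_fun_eq_card, Fintype.card_fin, Module.finrank_prod,
        finrank_euclideanSpace_fin, Module.finrank_self] at hle
      omega
    obtain ⟨w, hwker, hwne⟩ := (Submodule.ne_bot_iff _).mp hker
    have hΦ : (f1.prod f2) w = 0 := LinearMap.mem_ker.mp hwker
    rw [LinearMap.prod_apply, Function.prod] at hΦ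
    have hw1 : f1 w = 0 := congrArg Prod.fst hΦ
    have hw2 : f2 w = 0 := congrArg Prod.snd hΦ
    rw [hf1] at hw1
    rw [hf2] at hw2
    refine ⟨w, hwne, ?_, hw2⟩
    funext i
    rw [gram_mulVec hgram w i, hw1]
    simp

lemma matrix_to_sph {d : ℕ} {G : SimpleGraph (Fin (d+2))} [DecidableRel G.Adj] {k t : ℝ}
    (hk : 1 < k) (ht : 0 < t) (hpsd : (t • Jmat (d+2) + BG G k).PosSemidef)
    (hrank : (t • Jmat (d+2) + BG G k).rank ≤ d)
    (hpair : ∃ i j, G.Adj i j) (hpair2 : ∃ i j : Fin (d+2), i ≠ j ∧ ¬ G.Adj i j) :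
    SphericalWith (d+2) d G k := by
  have hk0 : 0 < k := lt_trans one_pos hk
  obtain ⟨p, hp⟩ := exists_points _ hpsd hrank
  have hdist : ∀ i j, dist (p i) (p j) ^ 2 = 2 * t - 2 * ((t • Jmat (d+2) + BG G k) i j) := by
    intro i j
    rw [dist_eq_norm, norm_sub_sq_real, ← real_inner_self_eq_norm_sq,
      ← real_inner_self_eq_norm_sq, hp, hp, hp, tJB_diag, tJB_diag]
    ring
  have hd_adj : ∀ i j, G.Adj i j → dist (p i) (p j) = Real.sqrt 2 * k := by
    intro i j h
    have h2 : dist (p i) (p j) ^ 2 = 2 * k ^ 2 := by rw [hdist, tJB_adj k t h]; ring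
    have h3 : dist (p i) (p j) = Real.sqrt (2 * k ^ 2) := by
      rw [← h2, Real.sqrt_sq dist_nonneg]
    rw [h3, Real.sqrt_mul (by norm_num), Real.sqrt_sq hk0.le]
  have hd_nonadj : ∀ i j, i ≠ j → ¬ G.Adj i j → dist (p i) (p j) = Real.sqrt 2 := by
    intro i j h1 h2
    have h3 : dist (p i) (p j) ^ 2 = 2 := by rw [hdist, tJB_nonadj k t h1 h2]; ring
    rw [← h3, Real.sqrt_sq dist_nonneg]
  have hnorm : ∀ i, dist (p i) 0 = Real.sqrt t := by
    intro i
    have h1 : ‖p i‖ ^ 2 = t := by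
      rw [← real_inner_self_eq_norm_sq, hp, tJB_diag]
    rw [dist_zero_right, ← Real.sqrt_sq (norm_nonneg (p i)), h1]
  have hsq2 : (0:ℝ) < Real.sqrt 2 := Real.sqrt_pos.mpr (by norm_num)
  refine ⟨p, 0, Real.sqrt t, ⟨Real.sqrt 2 * k, Real.sqrt 2, ?_, hsq2, ?_, hd_adj, hd_nonadj,
    hpair, hpair2⟩, hnorm⟩
  · nlinarith
  · field_simp

end AuxLemmas

set_option maxHeartbeats 1000000 in
/-- **Lemma 4.** Let `G` on `d+2` vertices be representable in `ℝ^d` with ratio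
`k`. Then `G` has a spherical representation with ratio `k` iff (3) the
polynomial (in `x`) `det(x·J + B_G(k))` is zero, and (4) there is `r₀` with
`r·J + B_G(k)` positive semidefinite for all `r ≥ r₀`. -/
theorem stmt6 (d : ℕ) (G : SimpleGraph (Fin (d+2))) [DecidableRel G.Adj]
    (k : ℝ) (hk : 1 < k) (hrep : RepresentableWith (d+2) d G k) :
    SphericalWith (d+2) d G k ↔
      (((Polynomial.X : Polynomial ℝ) • (Jmat (d+2)).map (fun x => Polynomial.C x)
          + (BG G k).map (fun x => Polynomial.C x)).det = 0 ∧
       (∃ r₀ : ℝ, ∀ r : ℝ, r₀ ≤ r → (r • Jmat (d+2) + BG G k).PosSemidef)) := by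
  obtain ⟨p₀, _, _, _, _, _, _, _, hpair, hpair2⟩ := hrep
  constructor
  · intro hs
    obtain ⟨t, htpos, hpsd, w, hwne, hMw, hsumw⟩ := sph_to_matrix hs
    have hJw : Jmat (d+2) *ᵥ w = 0 := by
      rw [Jmat_mulVec]
      funext i
      simpa using hsumw
    have hBw : BG G k *ᵥ w = 0 := by
      have := hMw
      rw [Matrix.add_mulVec, Matrix.smul_mulVec, hJw, smul_zero, zero_add] at this
      exact this
    constructor
    · refine Polynomial.funext fun r => ?_
      rw [Polynomial.eval_zero, eval_detP]
      refine Matrix.exists_mulVec_eq_zero_iff.mp ⟨w, hwne, ?_⟩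
      rw [Matrix.add_mulVec, Matrix.smul_mulVec, hJw, hBw, smul_zero, add_zero]
    · refine ⟨t, fun r hr => ?_⟩
      have hdec : r • Jmat (d+2) + BG G k
          = (t • Jmat (d+2) + BG G k) + (r - t) • Jmat (d+2) := by
        rw [sub_smul]; abel
      rw [hdec]
      exact hpsd.add (psd_smulJ (by linarith))
  · rintro ⟨h3, h4r₀, h4⟩
    have hdet : ∀ r : ℝ, (r • Jmat (d+2) + BG G k).det = 0 := fun r => by
      rw [← eval_detP, h3, Polynomial.eval_zero]
    set S : Set ℝ := {t : ℝ | (t • Jmat (d+2) + BG G k).PosSemidef} with hSdef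
    have hSne : S.Nonempty := ⟨h4r₀, h4 h4r₀ le_rfl⟩
    have hSbdd : BddBelow S := ⟨1/2, fun t ht => psd_t_ge hk.le ht⟩
    set t₀ : ℝ := sInf S with ht₀def
    have ht₀half : 1/2 ≤ t₀ := le_csInf hSne fun t ht => psd_t_ge hk.le ht
    set M : Matrix (Fin (d+2)) (Fin (d+2)) ℝ := t₀ • Jmat (d+2) + BG G k with hMdef
    -- M is positive semidefinite
    have hMpsd : M.PosSemidef := by
      refine psd_iff.2 ⟨herm_tJB k t₀, fun x => ?_⟩
      rw [hMdef, quad_smulJ_add]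
      set cc : ℝ := (∑ i, x i) ^ 2 with hcc
      set bb : ℝ := x ⬝ᵥ (BG G k *ᵥ x) with hbb
      have hcc0 : 0 ≤ cc := sq_nonneg _
      by_contra hneg
      push_neg at hneg
      have hεpos : 0 < (-(t₀ * cc + bb)) / (cc + 1) := by
        apply div_pos (by linarith) (by linarith)
      obtain ⟨t₁, ht₁S, ht₁lt⟩ := Real.lt_sInf_add_pos hSne hεpos
      have h0 : 0 ≤ t₁ * cc + bb := by
        have := psd_quad_nonneg ht₁S x
        rw [quad_smulJ_add] at this
        exact this
      rw [← ht₀def] at ht₁lt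
      have hq1 : t₁ * cc ≤ (t₀ + (-(t₀ * cc + bb)) / (cc + 1)) * cc :=
        mul_le_mul_of_nonneg_right ht₁lt.le hcc0
      have hq2 : ((-(t₀ * cc + bb)) / (cc + 1)) * cc ≤ -(t₀ * cc + bb) := by
        rw [div_mul_eq_mul_div, div_le_iff₀ (by linarith)]
        nlinarith
      nlinarith
    -- first kernel vector, orthogonal to the all-ones vector
    obtain ⟨u, hune, huk⟩ := Matrix.exists_mulVec_eq_zero_iff.mpr (hdet (t₀ + 1))
    have hdec1 : (t₀ + 1) • Jmat (d+2) + BG G k = M + Jmat (d+2) := by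
      rw [hMdef, add_smul, one_smul]; abel
    rw [hdec1, Matrix.add_mulVec] at huk
    have hqsum : u ⬝ᵥ (M *ᵥ u) + (∑ i, u i) ^ 2 = 0 := by
      have := congrArg (fun v => u ⬝ᵥ v) huk
      simpa [dotProduct_add, quad_J] using this
    have hMu : M *ᵥ u = 0 := by
      refine psd_mulVec_zero hMpsd ?_
      have h1 := psd_quad_nonneg hMpsd u
      nlinarith [sq_nonneg (∑ i, u i)]
    have hsumu : ∑ i, u i = 0 := by
      have h1 := psd_quad_nonneg hMpsd u
      have : (∑ i, u i) ^ 2 = 0 := by nlinarith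
      exact pow_eq_zero_iff (n := 2) (by norm_num) |>.mp this
    -- second, independent kernel vector
    by_cases hcase : ∀ v : Fin (d+2) → ℝ, M *ᵥ v = 0 → ∃ c : ℝ, v = c • u
    · exfalso
      obtain ⟨mm, hmmpos, hmm⟩ := quad_lower_bound (by omega) M hMpsd u hune hcase
      set ε : ℝ := mm / ((d+2 : ℝ) ^ 2 + 1) with hεdef
      have hεpos : 0 < ε := by
        apply div_pos hmmpos (by positivity)
      have hmem : (t₀ - ε) ∈ S := by
        refine psd_iff.2 ⟨herm_tJB k _, fun x => ?_⟩
        rw [quad_smulJ_add]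
        set cdef : ℝ := (x ⬝ᵥ u) / (u ⬝ᵥ u) with hcdef
        set v : Fin (d+2) → ℝ := x - cdef • u with hvdef
        have hxv : x = cdef • u + v := by rw [hvdef]; abel
        have hvu : v ⬝ᵥ u = 0 := by
          rw [hvdef, sub_dotProduct, smul_dotProduct, smul_eq_mul, hcdef,
            div_mul_cancel₀ _ (dot_self_ne hune)]
          ring
        have hsumx : ∑ i, x i = ∑ i, v i := by
          rw [hxv]
          simp only [Pi.add_apply, Pi.smul_apply, smul_eq_mul]
          rw [Finset.sum_add_distrib, ← Finset.mul_sum, hsumu]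
          ring
        have hsymmM : Mᵀ = M := by
          rw [← Matrix.conjTranspose_eq_transpose_of_trivial]
          exact hMpsd.1
        have hquadx : x ⬝ᵥ (M *ᵥ x) = v ⬝ᵥ (M *ᵥ v) := by
          rw [hxv, Matrix.mulVec_add, Matrix.mulVec_smul, hMu, smul_zero, zero_add,
            add_dotProduct, smul_dotProduct, smul_eq_mul]
          have hw0 : u ⬝ᵥ (M *ᵥ v) = 0 := by
            rw [Matrix.dotProduct_mulVec]
            have huM : u ᵥ* M = M *ᵥ u := by
              nth_rewrite 1 [← hsymmM]
              rw [Matrix.vecMul_transpose]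
            rw [huM, hMu, zero_dotProduct]
          rw [hw0]
          ring
        have hBx : x ⬝ᵥ (BG G k *ᵥ x) = x ⬝ᵥ (M *ᵥ x) - t₀ * (∑ i, x i) ^ 2 := by
          have := quad_smulJ_add t₀ (BG G k) x
          rw [← hMdef] at this
          linarith
        have hlow : mm * ‖v‖ ^ 2 ≤ v ⬝ᵥ (M *ᵥ v) := hmm v hvu
        have habs : |∑ i, v i| ≤ (d+2 : ℝ) * ‖v‖ := by
          calc |∑ i, v i| ≤ ∑ i, |v i| := Finset.abs_sum_le_sum_abs _ _
            _ ≤ ∑ _i : Fin (d+2), ‖v‖ := by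
                refine Finset.sum_le_sum fun i _ => ?_
                simpa [Real.norm_eq_abs] using norm_le_pi_norm v i
            _ = (d+2 : ℝ) * ‖v‖ := by
                rw [Finset.sum_const, Finset.card_univ, Fintype.card_fin, nsmul_eq_mul]
                push_cast
                ring
        have hsq : (∑ i, v i) ^ 2 ≤ ((d+2 : ℝ)) ^ 2 * ‖v‖ ^ 2 := by
          have h1 : (∑ i, v i) ^ 2 = |∑ i, v i| ^ 2 := (sq_abs _).symm
          have h2 : |∑ i, v i| ^ 2 ≤ ((d+2 : ℝ) * ‖v‖) ^ 2 :=
            pow_le_pow_left₀ (abs_nonneg _) habs 2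
          nlinarith
        have hεbound : ε * ((d+2 : ℝ)) ^ 2 ≤ mm := by
          rw [hεdef, div_mul_eq_mul_div, div_le_iff₀ (by positivity)]
          have h9 : ((d+2 : ℝ)) ^ 2 ≤ ((d+2 : ℝ)) ^ 2 + 1 := by linarith
          exact mul_le_mul_of_nonneg_left h9 hmmpos.le
        rw [hBx, hsumx, hquadx]
        have e1 : ε * (∑ i, v i) ^ 2 ≤ ε * (((d+2 : ℝ)) ^ 2 * ‖v‖ ^ 2) :=
          mul_le_mul_of_nonneg_left hsq hεpos.le
        have e3 : (ε * ((d+2 : ℝ)) ^ 2) * ‖v‖ ^ 2 ≤ mm * ‖v‖ ^ 2 :=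
          mul_le_mul_of_nonneg_right hεbound (sq_nonneg _)
        have egoal : (t₀ - ε) * (∑ i, v i) ^ 2 + (v ⬝ᵥ (M *ᵥ v) - t₀ * (∑ i, v i) ^ 2)
            = v ⬝ᵥ (M *ᵥ v) - ε * (∑ i, v i) ^ 2 := by ring
        rw [egoal]
        have e4 : ε * (((d+2 : ℝ)) ^ 2 * ‖v‖ ^ 2) = (ε * ((d+2 : ℝ)) ^ 2) * ‖v‖ ^ 2 := by ring
        linarith
      have : t₀ ≤ t₀ - ε := csInf_le hSbdd hmem
      linarith
    · push_neg at hcase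
      obtain ⟨w₂, hw₂ker, hw₂notspan⟩ := hcase
      have hspanlt : Submodule.span ℝ {u} < LinearMap.ker M.mulVecLin := by
        rw [SetLike.lt_iff_le_and_exists]
        constructor
        · rw [Submodule.span_le, Set.singleton_subset_iff]
          rw [SetLike.mem_coe, LinearMap.mem_ker, Matrix.mulVecLin_apply]
          exact hMu
        · refine ⟨w₂, ?_, ?_⟩
          · rw [LinearMap.mem_ker, Matrix.mulVecLin_apply]; exact hw₂ker
          · intro hmem
            obtain ⟨c, hc⟩ := Submodule.mem_span_singleton.mp hmem
            exact hw₂notspan c hc.symm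
      have h2le : 2 ≤ Module.finrank ℝ (LinearMap.ker M.mulVecLin) := by
        have hlt := Submodule.finrank_lt_finrank_of_lt hspanlt
        rw [finrank_span_singleton hune] at hlt
        omega
      have hrank : M.rank ≤ d := by
        have hre : M.rank = Module.finrank ℝ (LinearMap.range M.mulVecLin) := rfl
        have hrn := LinearMap.finrank_range_add_finrank_ker M.mulVecLin
        rw [Module.finrank_fintype_fun_eq_card, Fintype.card_fin] at hrn
        omega
      exact matrix_to_sph hk (by linarith) hMpsd hrank hpair hpair2
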